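/- Let X^n, Y^n be discrete random vectors and Z^n the coordinatewise erasure of Y^n: Z_i = Y_i with probability p and Z_i = e otherwise, erasure indicators i.i.d. Bernoulli(p) independent of (X^n, Y^n). Assume moreover that for each i, Y_i is conditionally independent of (Y₁^{i−1}, Z_{i+1}^n) given X^n (memoryless observation channel). Then I(X^n; Z^n) = p·I(X^n; Y^n) + (1−p)·∑_{i=1}^n I(Y_i; Z_{i+1},…,Z_n | Y₁,…,Y_{i−1}). -/

import Mathlib

open Real Finset

open scoped Classical in
/-- Probability that the random variable `X` takes the value `a`, under the pmf `f`
on the finite sample space `Ω`. -/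
noncomputable def pr {Ω α : Type*} [Fintype Ω] (f : Ω → ℝ) (X : Ω → α) (a : α) : ℝ :=
  ∑ ω, if X ω = a then f ω else 0

/-- Shannon entropy (natural log) of a random variable `X` on a finite space. -/
noncomputable def ent {Ω α : Type*} [Fintype Ω] [Fintype α] (f : Ω → ℝ) (X : Ω → α) : ℝ :=
  ∑ a, Real.negMulLog (pr f X a)

/-- Mutual information `I(X;Y) = H(X) + H(Y) - H(X,Y)`. -/
noncomputable def mi {Ω α β : Type*} [Fintype Ω] [Fintype α] [Fintype β]
    (f : Ω → ℝ) (X : Ω → α) (Y : Ω → β) : ℝ :=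
  ent f X + ent f Y - ent f (fun ω => (X ω, Y ω))

/-- Conditional entropy `H(X|Y) = H(X,Y) - H(Y)`. -/
noncomputable def condEnt {Ω α β : Type*} [Fintype Ω] [Fintype α] [Fintype β]
    (f : Ω → ℝ) (X : Ω → α) (Y : Ω → β) : ℝ :=
  ent f (fun ω => (X ω, Y ω)) - ent f Y

/-- Conditional mutual information
`I(X;Y|Z) = H(X,Z) + H(Y,Z) - H(X,Y,Z) - H(Z)`. -/
noncomputable def cmi {Ω α β γ : Type*} [Fintype Ω] [Fintype α] [Fintype β] [Fintype γ]
    (f : Ω → ℝ) (X : Ω → α) (Y : Ω → β) (Z : Ω → γ) : ℝ :=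
  ent f (fun ω => (X ω, Z ω)) + ent f (fun ω => (Y ω, Z ω))
    - ent f (fun ω => (X ω, Y ω, Z ω)) - ent f Z

/-!
Write `Y^{<i}` and `Z^{>i}` for prefixes and suffixes, and `Bⁿ` for the erasure pattern. Since
`(Yⁿ, Zⁿ)` and `(Yⁿ, Bⁿ)` determine each other and `Bⁿ` is independent of `(Xⁿ, Yⁿ)`, we get
`I(X;Z) = I(X;Y) - I(X;Y|Z)`, and the chain rule expands `I(X;Y|Z) = ∑ᵢ I(X;Yᵢ|Y^{<i},Zⁿ)`.
Averaging over the independent erasure pattern, the `i`-th term vanishes when `Yᵢ` is observed,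
and when `Yᵢ` is erased (probability `1 - p`) the erasures before `i` add nothing to `Y^{<i}`;
so it equals `(1 - p) I(X;Yᵢ|Y^{<i},Z^{>i})`. On the other hand, the chain rule for `I(X;Y)` and
the Markov chain `(Y^{<i}, Z^{>i}) → X → Yᵢ` give
`I(X;Yᵢ|Y^{<i}) = I(X;Yᵢ|Y^{<i},Z^{>i}) + I(Yᵢ;Z^{>i}|Y^{<i})`. Comparing the two expansions
yields the identity.
-/

open scoped Classical
open Function

section Law

variable {Ω α β γ : Type*} [Fintype Ω] (f : Ω → ℝ)

lemma pr_nonneg (hf0 : ∀ ω, 0 ≤ f ω) (X : Ω → α) (a : α) : 0 ≤ pr f X a :=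
  Finset.sum_nonneg fun ω _ => by split_ifs <;> simp [hf0]

lemma sum_pr [Fintype α] (X : Ω → α) : ∑ a, pr f X a = ∑ ω, f ω := by
  unfold pr
  rw [Finset.sum_comm]
  simp

lemma pr_comp [Fintype α] (T : Ω → α) (φ : α → γ) (c : γ) :
    pr f (fun ω => φ (T ω)) c = pr (pr f T) φ c := by
  unfold pr
  simp_rw [← Finset.sum_filter]
  rw [← Finset.sum_fiberwise_of_maps_to (g := T) (t := Finset.univ.filter (φ · = c)) (by simp)]
  refine Finset.sum_congr rfl fun a ha => Finset.sum_congr ?_ fun _ _ => rfl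
  ext ω
  simp only [Finset.mem_filter, Finset.mem_univ, true_and] at ha ⊢
  constructor
  · exact And.right
  · rintro rfl; exact ⟨ha, rfl⟩

variable [Fintype α] [Fintype β]

lemma pr_fst_eq_sum (A : Ω → α) (B : Ω → β) (a : α) :
    pr f A a = ∑ b, pr f (fun ω => (A ω, B ω)) (a, b) := by
  rw [show pr f A a = pr f (fun ω => (A ω, B ω).1) a from rfl, pr_comp]
  simp [pr, Fintype.sum_prod_type]

lemma pr_snd_eq_sum (A : Ω → α) (B : Ω → β) (b : β) :
    pr f B b = ∑ a, pr f (fun ω => (A ω, B ω)) (a, b) := by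
  rw [show pr f B b = pr f (fun ω => (A ω, B ω).2) b from rfl, pr_comp]
  simp [pr, Fintype.sum_prod_type]

lemma pr_prod_eq_zero_of_pr_eq_zero (hf0 : ∀ ω, 0 ≤ f ω) {A : Ω → α} {a : α} (ha : pr f A a = 0)
    (B : Ω → β) (b : β) : pr f (fun ω => (A ω, B ω)) (a, b) = 0 := by
  rw [pr_fst_eq_sum f A B, Finset.sum_eq_zero_iff_of_nonneg fun _ _ => pr_nonneg f hf0 _ _] at ha
  exact ha b (Finset.mem_univ b)

end Law

section Entropy

variable {Ω α γ : Type*} [Fintype Ω] [Fintype α] [Fintype γ] (f : Ω → ℝ)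

lemma ent_comp (T : Ω → α) (φ : α → γ) : ent f (fun ω => φ (T ω)) = ent (pr f T) φ := by
  simp only [ent, pr_comp]

lemma ent_eq_of_injective (V : Ω → γ) (W : Ω → α) (g : α → γ) (hg : Injective g)
    (h : ∀ ω, V ω = g (W ω)) : ent f V = ent f W := by
  obtain rfl : V = fun ω => g (W ω) := funext h
  have hpr : ∀ a, pr f (fun ω => g (W ω)) (g a) = pr f W a := by
    simp [pr, hg.eq_iff]
  unfold ent
  rw [← Finset.sum_subset (Finset.subset_univ (Finset.univ.map ⟨g, hg⟩)), Finset.sum_map]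
  · simp [hpr]
  · intro c _ hc
    have : pr f (fun ω => g (W ω)) c = 0 :=
      Finset.sum_eq_zero fun ω _ => if_neg fun h => hc (by simp [← h])
    simp [this]

lemma ent_const (hf1 : ∑ ω, f ω = 1) (c : α) : ent f (fun _ => c) = 0 := by
  refine Finset.sum_eq_zero fun a _ => ?_
  by_cases h : c = a <;> simp [pr, h, hf1]

end Entropy

section Independence

variable {Ω τ δ α β γ : Type*} [Fintype Ω] (f : Ω → ℝ)

def IndepPr (A : Ω → α) (B : Ω → β) : Prop :=
  ∀ a b, pr f (fun ω => (A ω, B ω)) (a, b) = pr f A a * pr f B b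

lemma IndepPr.comp [Fintype α] [Fintype β] {A : Ω → α} {B : Ω → β} (h : IndepPr f A B)
    (gA : α → γ) (gB : β → δ) : IndepPr f (fun ω => gA (A ω)) (fun ω => gB (B ω)) := by
  intro c e
  have hlaw : pr f (fun ω => (A ω, B ω)) = fun ab => pr f A ab.1 * pr f B ab.2 :=
    funext fun ab => h ab.1 ab.2
  refine (pr_comp f (fun ω => (A ω, B ω)) (Prod.map gA gB) (c, e)).trans ?_
  rw [pr_comp f A, pr_comp f B, hlaw]
  generalize pr f A = qA, pr f B = qB
  simp only [pr, Fintype.sum_prod_type, Prod.map, Prod.mk.injEq, Finset.sum_mul_sum]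
  refine Finset.sum_congr rfl fun a _ => Finset.sum_congr rfl fun b _ => ?_
  split_ifs <;> simp_all

variable [Fintype τ] [Fintype δ] [Fintype γ]

-- `Φ t d` reveals `d`, so `H(V) = H(D) + H(V | D)`, and given `D = d` the law of `V` is that
-- of `Φ T d` by independence.
lemma ent_mixture (hf1 : ∑ ω, f ω = 1) (T : Ω → τ) (D : Ω → δ) (hTD : IndepPr f T D)
    (Φ : τ → δ → γ) (ψ : γ → δ) (hψ : ∀ t d, ψ (Φ t d) = d) :
    ent f (fun ω => Φ (T ω) (D ω))
      = ent f D + ∑ d, pr f D d * ent (pr f T) (fun t => Φ t d) := by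
  have hpr : ∀ v, pr f (fun ω => Φ (T ω) (D ω)) v
      = pr f D (ψ v) * pr (pr f T) (fun t => Φ t (ψ v)) v := by
    intro v
    refine (pr_comp f (fun ω => (T ω, D ω)) (fun td => Φ td.1 td.2) v).trans ?_
    have hlaw : pr f (fun ω => (T ω, D ω)) = fun td => pr f T td.1 * pr f D td.2 :=
      funext fun td => hTD td.1 td.2
    rw [hlaw]
    generalize pr f T = q, pr f D = κ
    unfold pr
    rw [Fintype.sum_prod_type, Finset.sum_comm, Finset.sum_eq_single (ψ v), Finset.mul_sum]
    · exact Finset.sum_congr rfl fun t _ => by split_ifs <;> ring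
    · exact fun d _ hd => Finset.sum_eq_zero fun t _ => if_neg fun h => hd (by rw [← h, hψ])
    · simp
  have hfiber : ∀ d v, ψ v ≠ d → pr (pr f T) (fun t => Φ t d) v = 0 := fun d v hv =>
    Finset.sum_eq_zero fun t _ => if_neg fun h => hv (by rw [← h, hψ])
  have hsplit : ∀ v, Real.negMulLog (pr f (fun ω => Φ (T ω) (D ω)) v)
      = ∑ d, (pr (pr f T) (fun t => Φ t d) v * Real.negMulLog (pr f D d)
          + pr f D d * Real.negMulLog (pr (pr f T) (fun t => Φ t d) v)) := by
    intro v
    rw [Finset.sum_eq_single (ψ v), hpr, Real.negMulLog_mul]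
    · intro d _ hd
      simp [hfiber d v (Ne.symm hd)]
    · simp
  have hmass : ∀ d, ∑ v, pr (pr f T) (fun t => Φ t d) v = 1 := fun d => by
    rw [sum_pr, sum_pr, hf1]
  unfold ent
  simp only [hsplit]
  rw [Finset.sum_comm, ← Finset.sum_add_distrib]
  refine Finset.sum_congr rfl fun d _ => ?_
  rw [Finset.sum_add_distrib, ← Finset.sum_mul, hmass, one_mul, Finset.mul_sum]

lemma ent_mixture_of_injective (hf1 : ∑ ω, f ω = 1) (T : Ω → τ) (D : Ω → δ)
    (hTD : IndepPr f T D) (Φ : τ → δ → γ) (ψ : γ → δ) (hψ : ∀ t d, ψ (Φ t d) = d)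
    (hΦ : ∀ d, Injective (Φ · d)) :
    ent f (fun ω => Φ (T ω) (D ω)) = ent f D + ent f T := by
  have hslice : ∀ d, ent (pr f T) (fun t => Φ t d) = ent f T := fun d => by
    rw [← ent_comp]
    exact ent_eq_of_injective f _ T _ (hΦ d) fun _ => rfl
  simp only [ent_mixture f hf1 T D hTD Φ ψ hψ, hslice, ← Finset.sum_mul, sum_pr, hf1, one_mul]

end Independence

section ConditionalMutualInformation

variable {Ω τ δ α β γ α' β' γ' : Type*} [Fintype Ω] [Fintype α] [Fintype β] [Fintype γ]
  (f : Ω → ℝ)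

lemma cmi_eq_of_injective [Fintype α'] [Fintype β'] [Fintype γ'] {X : Ω → α} {Y : Ω → β}
    {C : Ω → γ} {X' : Ω → α'} {Y' : Ω → β'} {C' : Ω → γ'}
    (gX : α' → α) (gY : β' → β) (gC : γ' → γ) (hgX : Injective gX) (hgY : Injective gY)
    (hgC : Injective gC) (hX : ∀ ω, X ω = gX (X' ω)) (hY : ∀ ω, Y ω = gY (Y' ω))
    (hC : ∀ ω, C ω = gC (C' ω)) : cmi f X Y C = cmi f X' Y' C' := by
  unfold cmi
  rw [ent_eq_of_injective f _ (fun ω => (X' ω, C' ω)) (Prod.map gX gC) (hgX.prodMap hgC)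
      fun ω => by simp [hX, hC],
    ent_eq_of_injective f _ (fun ω => (Y' ω, C' ω)) (Prod.map gY gC) (hgY.prodMap hgC)
      fun ω => by simp [hY, hC],
    ent_eq_of_injective f _ (fun ω => (X' ω, Y' ω, C' ω)) (Prod.map gX (Prod.map gY gC))
      (hgX.prodMap (hgY.prodMap hgC)) fun ω => by simp [hX, hY, hC],
    ent_eq_of_injective f _ C' gC hgC hC]

lemma cmi_eq_zero_of_eq_comp (X : Ω → α) {Y : Ω → β} {C : Ω → γ} (φ : γ → β)
    (h : ∀ ω, Y ω = φ (C ω)) : cmi f X Y C = 0 := by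
  unfold cmi
  rw [ent_eq_of_injective f _ C (fun c => (φ c, c)) (fun _ _ hc => congrArg Prod.snd hc)
      fun ω => by simp [h],
    ent_eq_of_injective f _ (fun ω => (X ω, C ω)) (fun xc => (xc.1, φ xc.2, xc.2))
      (by intro _ _ hc; simp_all [Prod.ext_iff]) fun ω => by simp [h]]
  ring

lemma mi_eq_cmi_const [Fintype γ'] (hf1 : ∑ ω, f ω = 1) (X : Ω → α) (Y : Ω → β) (c : γ') :
    mi f X Y = cmi f X Y (fun _ => c) := by
  simp only [mi, cmi]
  rw [ent_eq_of_injective f (fun ω => (X ω, c)) X (fun x => (x, c))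
      (fun _ _ h => congrArg Prod.fst h) fun _ => rfl,
    ent_eq_of_injective f (fun ω => (Y ω, c)) Y (fun y => (y, c))
      (fun _ _ h => congrArg Prod.fst h) fun _ => rfl,
    ent_eq_of_injective f (fun ω => (X ω, Y ω, c)) (fun ω => (X ω, Y ω))
      (fun xy => (xy.1, xy.2, c))
      (by intro _ _ h; simp_all [Prod.ext_iff]) fun _ => rfl,
    ent_const f hf1]
  ring

lemma cmi_mixture [Fintype τ] [Fintype δ] (hf1 : ∑ ω, f ω = 1) (T : Ω → τ) (D : Ω → δ)
    (hTD : IndepPr f T D) (gX : τ → α) (gY : τ → β) (Φ : τ → δ → γ) (ψ : γ → δ)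
    (hψ : ∀ t d, ψ (Φ t d) = d) {X : Ω → α} {Y : Ω → β} {C : Ω → γ}
    (hX : ∀ ω, X ω = gX (T ω)) (hY : ∀ ω, Y ω = gY (T ω)) (hC : ∀ ω, C ω = Φ (T ω) (D ω)) :
    cmi f X Y C = ∑ d, pr f D d * cmi (pr f T) gX gY (fun t => Φ t d) := by
  obtain rfl := funext hX
  obtain rfl := funext hY
  obtain rfl := funext hC
  unfold cmi
  rw [ent_mixture f hf1 T D hTD (fun t d => (gX t, Φ t d)) (fun v => ψ v.2) (by simp [hψ]),
    ent_mixture f hf1 T D hTD (fun t d => (gY t, Φ t d)) (fun v => ψ v.2) (by simp [hψ]),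
    ent_mixture f hf1 T D hTD (fun t d => (gX t, gY t, Φ t d)) (fun v => ψ v.2.2)
      (by simp [hψ]),
    ent_mixture f hf1 T D hTD Φ ψ hψ]
  simp only [mul_sub, mul_add, Finset.sum_add_distrib, Finset.sum_sub_distrib]
  ring

end ConditionalMutualInformation

section ConditionalIndependence

variable {Ω α β γ δ : Type*} [Fintype Ω] (f : Ω → ℝ)

lemma sum_sum_negMulLog_mul_div {ι κ : Type*} [Fintype ι] [Fintype κ] (u : ι → ℝ) (v : κ → ℝ)
    {s : ℝ} (hs : s ≠ 0) (hu : ∑ i, u i = s) (hv : ∑ j, v j = s) :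
    ∑ i, ∑ j, Real.negMulLog (u i * v j / s) + Real.negMulLog s
      = ∑ i, Real.negMulLog (u i) + ∑ j, Real.negMulLog (v j) := by
  simp_rw [div_eq_mul_inv, mul_assoc, Real.negMulLog_mul, mul_add, Finset.sum_add_distrib,
    ← Finset.sum_mul, ← Finset.mul_sum, ← Finset.sum_mul, hu, hv]
  simp only [Real.negMulLog, Real.log_inv]
  field_simp
  ring

-- `P(y, w | x) = P(y | x) P(w | x)`, multiplied out so that no division by `P(X = x)` occurs.
def CondIndepPr (X : Ω → α) (Y : Ω → β) (W : Ω → γ) : Prop :=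
  ∀ x y w, pr f (fun ω => (X ω, Y ω, W ω)) (x, y, w) * pr f X x
    = pr f (fun ω => (X ω, Y ω)) (x, y) * pr f (fun ω => (X ω, W ω)) (x, w)

lemma pr_prod_comp_snd [Fintype α] [Fintype γ] (A : Ω → α) (W : Ω → γ) (g : γ → δ) (a : α)
    (c : δ) : pr f (fun ω => (A ω, g (W ω))) (a, c)
      = ∑ w, if g w = c then pr f (fun ω => (A ω, W ω)) (a, w) else 0 := by
  refine (pr_comp f (fun ω => (A ω, W ω)) (Prod.map id g) (a, c)).trans ?_
  simp [pr, Fintype.sum_prod_type, ite_and]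

lemma CondIndepPr.comp [Fintype α] [Fintype β] [Fintype γ] {X : Ω → α} {Y : Ω → β} {W : Ω → γ}
    (h : CondIndepPr f X Y W) (g : γ → δ) : CondIndepPr f X Y (fun ω => g (W ω)) := by
  intro x y c
  have htriple : pr f (fun ω => (X ω, Y ω, g (W ω))) (x, y, c)
      = ∑ w, if g w = c then pr f (fun ω => (X ω, Y ω, W ω)) (x, y, w) else 0 := by
    refine (pr_prod_comp_snd f X (fun ω => (Y ω, W ω)) (Prod.map id g) x (y, c)).trans ?_
    simp [Fintype.sum_prod_type, ite_and]
  beta_reduce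
  rw [htriple, pr_prod_comp_snd f X W g, Finset.sum_mul, Finset.mul_sum]
  refine Finset.sum_congr rfl fun w _ => ?_
  split_ifs
  · exact h x y w
  · simp

lemma ent_add_ent_of_condIndepPr [Fintype α] [Fintype β] [Fintype γ] (hf0 : ∀ ω, 0 ≤ f ω)
    {X : Ω → α} {Y : Ω → β} {W : Ω → γ} (h : CondIndepPr f X Y W) :
    ent f (fun ω => (X ω, Y ω, W ω)) + ent f X
      = ent f (fun ω => (X ω, Y ω)) + ent f (fun ω => (X ω, W ω)) := by
  simp only [ent, Fintype.sum_prod_type, ← Finset.sum_add_distrib]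
  refine Finset.sum_congr rfl fun x _ => ?_
  by_cases hs : pr f X x = 0
  · simp [hs, pr_prod_eq_zero_of_pr_eq_zero f hf0 hs]
  · have hfactor : ∀ y w, pr f (fun ω => (X ω, Y ω, W ω)) (x, y, w)
        = pr f (fun ω => (X ω, Y ω)) (x, y) * pr f (fun ω => (X ω, W ω)) (x, w) / pr f X x :=
      fun y w => (eq_div_iff hs).2 (h x y w)
    simp only [hfactor]
    exact sum_sum_negMulLog_mul_div _ _ hs (pr_fst_eq_sum f X Y x).symm
      (pr_fst_eq_sum f X W x).symm

lemma cmi_eq_add_of_condIndepPr [Fintype α] [Fintype β] [Fintype γ] [Fintype δ]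
    (hf0 : ∀ ω, 0 ≤ f ω) {X : Ω → α} {Y : Ω → β} {W₁ : Ω → γ} {W₂ : Ω → δ}
    (h : CondIndepPr f X Y (fun ω => (W₁ ω, W₂ ω))) :
    cmi f X Y W₁ = cmi f X Y (fun ω => (W₁ ω, W₂ ω)) + cmi f Y W₂ W₁ := by
  have hpair := ent_add_ent_of_condIndepPr f hf0 h
  have hfst : ent f (fun ω => (X ω, Y ω, W₁ ω)) + ent f X
      = ent f (fun ω => (X ω, Y ω)) + ent f (fun ω => (X ω, W₁ ω)) :=
    ent_add_ent_of_condIndepPr f hf0 (h.comp f Prod.fst)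
  have hswap : ent f (fun ω => (W₂ ω, W₁ ω)) = ent f (fun ω => (W₁ ω, W₂ ω)) :=
    ent_eq_of_injective f _ _ Prod.swap Prod.swap_injective fun _ => rfl
  have hswap' : ent f (fun ω => (Y ω, W₂ ω, W₁ ω)) = ent f (fun ω => (Y ω, W₁ ω, W₂ ω)) :=
    ent_eq_of_injective f _ _ (Prod.map id Prod.swap)
      (injective_id.prodMap Prod.swap_injective) fun _ => rfl
  unfold cmi
  linarith

end ConditionalIndependence

section ChainRule

variable {Ω α β₁ β₂ γ : Type*} [Fintype Ω] [Fintype α] [Fintype β₁] [Fintype β₂] [Fintype γ]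
  (f : Ω → ℝ)

lemma cmi_prod_eq_add (X : Ω → α) (Y₁ : Ω → β₁) (Y₂ : Ω → β₂) (C : Ω → γ) :
    cmi f X (fun ω => (Y₁ ω, Y₂ ω)) C = cmi f X Y₂ C + cmi f X Y₁ (fun ω => (Y₂ ω, C ω)) := by
  have hassoc : ent f (fun ω => ((Y₁ ω, Y₂ ω), C ω)) = ent f (fun ω => (Y₁ ω, Y₂ ω, C ω)) :=
    ent_eq_of_injective f _ _ _ (Equiv.prodAssoc _ _ _).symm.injective fun _ => rfl
  have hassoc' :
      ent f (fun ω => (X ω, (Y₁ ω, Y₂ ω), C ω)) = ent f (fun ω => (X ω, Y₁ ω, Y₂ ω, C ω)) :=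
    ent_eq_of_injective f _ _ _ (injective_id.prodMap (Equiv.prodAssoc _ _ _).symm.injective)
      fun _ => rfl
  unfold cmi
  linarith

lemma injective_split_lt_succ {n : ℕ} {β : Fin n → Type*} (i : Fin n) :
    Injective fun v : (∀ j : {j : Fin n // j.val < i.val + 1}, β j) =>
      (v ⟨i, Nat.lt_succ_self _⟩,
        fun j : {j : Fin n // j < i} => v ⟨j, Nat.lt_succ_of_lt j.2⟩) := by
  intro u v huv
  funext ⟨j, hj⟩
  rcases Nat.lt_succ_iff_lt_or_eq.1 hj with hlt | heq
  · exact congrFun (congrArg Prod.snd huv) ⟨j, hlt⟩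
  · obtain rfl : j = i := Fin.ext heq
    exact congrArg Prod.fst huv

variable {n : ℕ} {β : Fin n → Type*} [∀ i, Fintype (β i)]

lemma cmi_pi_eq_sum (X : Ω → α) (Y : ∀ i, Ω → β i) (C : Ω → γ) :
    cmi f X (fun ω i => Y i ω) C
      = ∑ i, cmi f X (Y i) (fun ω => ((fun j : {j : Fin n // j < i} => Y j.1 ω), C ω)) := by
  let a : ℕ → ℝ := fun k => cmi f X (fun ω (j : {j : Fin n // j.val < k}) => Y j.1 ω) C
  have hstep : ∀ i : Fin n, a (i + 1) - a i
      = cmi f X (Y i) (fun ω => ((fun j : {j : Fin n // j < i} => Y j.1 ω), C ω)) := by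
    intro i
    have hsplit : a (i + 1)
        = cmi f X (fun ω => (Y i ω, fun j : {j : Fin n // j < i} => Y j.1 ω)) C :=
      (cmi_eq_of_injective f id _ id injective_id (injective_split_lt_succ i) injective_id
        (fun _ => rfl) (fun _ => rfl) (fun _ => rfl)).symm
    have hprev : a i = cmi f X (fun ω (j : {j : Fin n // j < i}) => Y j.1 ω) C := rfl
    rw [hsplit, hprev, cmi_prod_eq_add]
    ring
  have h0 : a 0 = 0 :=
    cmi_eq_zero_of_eq_comp f X (fun _ j => absurd j.2 (Nat.not_lt_zero _))
      fun _ => funext fun j => absurd j.2 (Nat.not_lt_zero _)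
  have hn : a n = cmi f X (fun ω i => Y i ω) C :=
    cmi_eq_of_injective f id (fun y j => y j.1) id injective_id
      (fun _ _ h => funext fun i => congrFun h ⟨i, i.isLt⟩) injective_id
      (fun _ => rfl) (fun _ => rfl) (fun _ => rfl)
  rw [← hn, ← sub_zero (a n), ← h0, ← Finset.sum_range_sub, ← Fin.sum_univ_eq_sum_range]
  exact Finset.sum_congr rfl fun i _ => hstep i

lemma mi_pi_eq_sum (hf1 : ∑ ω, f ω = 1) (X : Ω → α) (Y : ∀ i, Ω → β i) :
    mi f X (fun ω i => Y i ω)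
      = ∑ i, cmi f X (Y i) (fun ω => fun j : {j : Fin n // j < i} => Y j.1 ω) := by
  rw [mi_eq_cmi_const f hf1 _ _ (), cmi_pi_eq_sum]
  exact Finset.sum_congr rfl fun i _ =>
    cmi_eq_of_injective f id id (fun y => (y, ())) injective_id injective_id
      (fun _ _ h => congrArg Prod.fst h) (fun _ => rfl) (fun _ => rfl) (fun _ => rfl)

end ChainRule

section ProductLaw

variable {Ω ι κ : Type*} [Fintype Ω] [Fintype ι] [Fintype κ] (f : Ω → ℝ)

lemma sum_pr_mul {α : Type*} [Fintype α] (A : Ω → α) (h : α → ℝ) :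
    ∑ a, pr f A a * h a = ∑ ω, f ω * h (A ω) := by
  simp only [pr, Finset.sum_mul, ite_mul, zero_mul]
  rw [Finset.sum_comm]
  simp

lemma sum_prod_mul_eq_sum_mul_sum_ne [DecidableEq ι] (i : ι) (w : κ → ℝ)
    (g : κ → ({j // j ≠ i} → κ) → ℝ) :
    ∑ a : ι → κ, (∏ j, w (a j)) * g (a i) (fun j => a j)
      = ∑ s, w s * ∑ r : {j // j ≠ i} → κ, (∏ j, w (r j)) * g s r := by
  rw [← (Equiv.piSplitAt i fun _ => κ).symm.sum_comp, Fintype.sum_prod_type]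
  refine Finset.sum_congr rfl fun s _ => ?_
  rw [Finset.mul_sum]
  refine Finset.sum_congr rfl fun r _ => ?_
  rw [Fintype.prod_eq_mul_prod_subtype_ne _ i]
  have hne : ∀ j : {j // j ≠ i}, (j : ι) ≠ i := fun j => j.2
  simp [Equiv.piSplitAt, hne, mul_assoc]

lemma pr_eval_prod_restrict_eq_mul (A : Ω → ι → κ) (w : κ → ℝ) (hw : ∑ s, w s = 1)
    (hA : ∀ a, pr f A a = ∏ j, w (a j)) {P : ι → Prop} {i : ι} (hi : ¬ P i) (s : κ)
    (c : {j // P j} → κ) :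
    pr f (fun ω => (A ω i, fun j : {j // P j} => A ω j)) (s, c)
      = w s * pr f (fun ω (j : {j // P j}) => A ω j) c := by
  let R : ({j // j ≠ i} → κ) → {j // P j} → κ := fun r j => r ⟨j, fun h => hi (h ▸ j.2)⟩
  have hlaw : pr f A = fun a => ∏ j, w (a j) := funext hA
  have hpush : ∀ {γ : Type _} [DecidableEq γ] (φ : (ι → κ) → γ) x,
      pr f (fun ω => φ (A ω)) x = ∑ a, (∏ j, w (a j)) * if φ a = x then 1 else 0 := by
    intro γ _ φ x
    rw [pr_comp, hlaw]
    simp [pr]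
  refine (hpush (fun a => (a i, R fun j => a j)) (s, c)).trans ?_
  rw [show pr f (fun ω (j : {j // P j}) => A ω j) c = _ from hpush (fun a => R fun j => a j) c,
    sum_prod_mul_eq_sum_mul_sum_ne i w (fun s' r => if (s', R r) = (s, c) then 1 else 0),
    sum_prod_mul_eq_sum_mul_sum_ne i w (fun _ r => if R r = c then 1 else 0),
    ← Finset.sum_mul, hw, one_mul]
  simp [ite_and]

end ProductLaw

section BernoulliPattern

variable {Ω τ ι : Type*} [Fintype Ω] [Fintype τ] [Fintype ι] (f : Ω → ℝ) (p : ℝ)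

def IndepBernoulli (T : Ω → τ) (B : Ω → ι → Bool) : Prop :=
  ∀ t b, pr f (fun ω => (T ω, B ω)) (t, b) = pr f T t * ∏ i, if b i then p else 1 - p

variable {f p} {T : Ω → τ} {B : Ω → ι → Bool}

lemma IndepBernoulli.pr_eq (h : IndepBernoulli f p T B) (hf1 : ∑ ω, f ω = 1) (b : ι → Bool) :
    pr f B b = ∏ i, if b i then p else 1 - p := by
  rw [pr_snd_eq_sum f T]
  simp only [h _ b, ← Finset.sum_mul, sum_pr, hf1, one_mul]

lemma IndepBernoulli.indepPr (h : IndepBernoulli f p T B) (hf1 : ∑ ω, f ω = 1) :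
    IndepPr f T B := fun t b => by
  rw [h t b, h.pr_eq hf1]

lemma IndepBernoulli.sum_pr_ite_eq_mul_sum [DecidableEq ι] (h : IndepBernoulli f p T B)
    (hf1 : ∑ ω, f ω = 1) {P : ι → Prop} [DecidablePred P] {i : ι} (hi : ¬ P i)
    (g : ({j // P j} → Bool) → ℝ) :
    ∑ b, pr f B b * (if b i then 0 else g fun j => b j)
      = (1 - p) * ∑ c, pr f (fun ω (j : {j // P j}) => B ω j) c * g c := by
  have hBi : ∀ c, pr f (fun ω => (B ω i, fun j : {j // P j} => B ω j)) (false, c)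
      = (1 - p) * pr f (fun ω (j : {j // P j}) => B ω j) c :=
    pr_eval_prod_restrict_eq_mul f B (fun t => if t then p else 1 - p) (by simp)
      (h.pr_eq hf1) hi false
  calc _ = ∑ tc : Bool × ({j // P j} → Bool),
        pr f (fun ω => (B ω i, fun j : {j // P j} => B ω j)) tc
          * (if tc.1 then 0 else g tc.2) := by rw [sum_pr_mul, sum_pr_mul]
    _ = _ := by simp [Fintype.sum_prod_type, hBi, Finset.mul_sum, mul_assoc]

end BernoulliPattern

section Erasure

variable {Ω σ : Type*} [Fintype Ω] [Fintype σ] {n : ℕ} {β : Fin n → Type*}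
  [∀ i, Fintype (β i)] {f : Ω → ℝ} {p : ℝ} {X : Ω → σ} {Y : ∀ i, Ω → β i}
  {B : Fin n → Ω → Bool}

lemma isSome_ite_some {α : Type*} (b : Bool) (y : α) :
    (if b then some y else none).isSome = b := by
  cases b <;> rfl

lemma mi_erasure_eq_sub (hf1 : ∑ ω, f ω = 1)
    (hind : IndepBernoulli f p (fun ω => (X ω, fun i => Y i ω)) (fun ω i => B i ω))
    {Z : ∀ i, Ω → Option (β i)} (hZ : ∀ i ω, Z i ω = if B i ω then some (Y i ω) else none) :
    mi f X (fun ω i => Z i ω)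
      = mi f X (fun ω i => Y i ω) - cmi f X (fun ω i => Y i ω) (fun ω i => Z i ω) := by
  obtain rfl : Z = fun i ω => if B i ω then some (Y i ω) else none :=
    funext fun i => funext (hZ i)
  have hindep := hind.indepPr hf1
  have hrecover : ∀ (y : ∀ i, β i) (b : Fin n → Bool),
      (fun i => (if b i then some (y i) else none).isSome) = b :=
    fun y b => funext fun i => isSome_ite_some _ _
  have hYZ : ent f (fun ω => ((fun i => Y i ω), fun i => if B i ω then some (Y i ω) else none))
      = ent f (fun ω i => B i ω) + ent f (fun ω i => Y i ω) :=
    ent_mixture_of_injective f hf1 (fun ω i => Y i ω) (fun ω i => B i ω)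
      (hindep.comp f Prod.snd id) (fun y b => (y, fun i => if b i then some (y i) else none))
      (fun v i => (v.2 i).isSome) (fun y b => hrecover y b) fun _ _ _ h => congrArg Prod.fst h
  have hXYZ : ent f (fun ω => (X ω, (fun i => Y i ω),
        fun i => if B i ω then some (Y i ω) else none))
      = ent f (fun ω i => B i ω) + ent f (fun ω => (X ω, fun i => Y i ω)) :=
    ent_mixture_of_injective f hf1 (fun ω => (X ω, fun i => Y i ω)) (fun ω i => B i ω) hindep
      (fun xy b => (xy.1, xy.2, fun i => if b i then some (xy.2 i) else none))
      (fun v i => (v.2.2 i).isSome) (fun xy b => hrecover xy.2 b)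
      fun _ _ _ h => by simp only [Prod.mk.injEq] at h; exact Prod.ext h.1 h.2.1
  simp only [mi, cmi]
  linarith

-- An observed `Yᵢ` is a function of the conditioning; if `Yᵢ` is erased, the erasures before `i`
-- are functions of `Y^{<i}`.
lemma cmi_erasedSlice_eq (q : σ × (∀ k, β k) → ℝ) (i : Fin n) [Nonempty (β i)]
    (b : Fin n → Bool) :
    cmi q Prod.fst (fun t => t.2 i) (fun t => ((fun j : {j : Fin n // j < i} => t.2 j.1),
        fun k => if b k then some (t.2 k) else none))
      = if b i then 0 else cmi q Prod.fst (fun t => t.2 i)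
          (fun t => ((fun j : {j : Fin n // j < i} => t.2 j.1),
            fun j : {j : Fin n // i < j} => if b j.1 then some (t.2 j.1) else none)) := by
  split_ifs with hbi
  · exact cmi_eq_zero_of_eq_comp q _ (fun v => (v.2 i).getD (Classical.arbitrary _))
      fun t => by simp [hbi]
  · let g : (∀ j : {j : Fin n // j < i}, β j.1) × (∀ j : {j : Fin n // i < j}, Option (β j.1))
        → (∀ j : {j : Fin n // j < i}, β j.1) × (∀ k, Option (β k)) := fun uv =>
      (uv.1, fun k => if h : k < i then (if b k then some (uv.1 ⟨k, h⟩) else none)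
        else if h' : i < k then uv.2 ⟨k, h'⟩ else none)
    have hg : Injective g := by
      rintro ⟨u, v⟩ ⟨u', v'⟩ h
      simp only [g, Prod.mk.injEq] at h
      obtain ⟨rfl, h⟩ := h
      refine Prod.ext rfl (funext fun j => ?_)
      simpa [j.2, lt_asymm j.2] using congrFun h j.1
    refine cmi_eq_of_injective q id id g injective_id injective_id hg (fun _ => rfl)
      (fun _ => rfl) fun t => Prod.ext rfl (funext fun k => ?_)
    rcases lt_trichotomy k i with h | rfl | h
    · simp [g, h]
    · simp [g, hbi]
    · simp [g, h, lt_asymm h]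

lemma cmi_erasure_eq (hf1 : ∑ ω, f ω = 1)
    (hind : IndepBernoulli f p (fun ω => (X ω, fun i => Y i ω)) (fun ω i => B i ω))
    {Z : ∀ i, Ω → Option (β i)} (hZ : ∀ i ω, Z i ω = if B i ω then some (Y i ω) else none)
    (i : Fin n) :
    cmi f X (Y i) (fun ω => ((fun j : {j : Fin n // j < i} => Y j.1 ω), fun k => Z k ω))
      = (1 - p) * cmi f X (Y i)
          (fun ω => ((fun j : {j : Fin n // j < i} => Y j.1 ω),
            fun j : {j : Fin n // i < j} => Z j.1 ω)) := by
  have hindep := hind.indepPr hf1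
  have : Nonempty (β i) := by
    obtain ⟨ω, -, -⟩ := Finset.exists_ne_zero_of_sum_ne_zero (hf1.trans_ne one_ne_zero)
    exact ⟨Y i ω⟩
  have hLHS := cmi_mixture f hf1 _ _ hindep Prod.fst (fun t => t.2 i)
    (fun t b => ((fun j : {j : Fin n // j < i} => t.2 j.1),
      fun k => if b k then some (t.2 k) else none))
    (fun v k => (v.2 k).isSome) (fun _ _ => funext fun _ => isSome_ite_some _ _)
    (X := X) (Y := Y i)
    (C := fun ω => ((fun j : {j : Fin n // j < i} => Y j.1 ω), fun k => Z k ω))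
    (fun _ => rfl) (fun _ => rfl) (fun ω => Prod.ext rfl (funext fun k => hZ k ω))
  have hRHS := cmi_mixture f hf1 _ _
    (hindep.comp f (fun t => t) fun b (j : {j : Fin n // i < j}) => b j) Prod.fst (fun t => t.2 i)
    (fun t c => ((fun j : {j : Fin n // j < i} => t.2 j.1),
      fun j : {j : Fin n // i < j} => if c j then some (t.2 j.1) else none))
    (fun v j => (v.2 j).isSome) (fun _ _ => funext fun _ => isSome_ite_some _ _)
    (X := X) (Y := Y i)
    (C := fun ω => ((fun j : {j : Fin n // j < i} => Y j.1 ω),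
      fun j : {j : Fin n // i < j} => Z j.1 ω))
    (fun _ => rfl) (fun _ => rfl) (fun ω => Prod.ext rfl (funext fun j => hZ j.1 ω))
  rw [hLHS, hRHS]
  simp only [cmi_erasedSlice_eq]
  exact hind.sum_pr_ite_eq_mul_sum hf1 (lt_irrefl i) fun c =>
    cmi (pr f fun ω => (X ω, fun k => Y k ω)) Prod.fst (fun t => t.2 i)
      fun t => ((fun j : {j : Fin n // j < i} => t.2 j.1),
        fun j : {j : Fin n // i < j} => if c j then some (t.2 j.1) else none)

end Erasure

/-- Noisy-observation identity: with `Zⁿ` the coordinatewise erasure of `Yⁿ` and the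
memoryless-channel Markov condition `(Y₁^{i-1}, Z_{i+1}ⁿ) → Xⁿ → Yᵢ`,
`I(Xⁿ;Zⁿ) = p I(Xⁿ;Yⁿ) + (1-p) ∑ᵢ I(Yᵢ; Z_{i+1}ⁿ | Y₁^{i-1})`. -/
theorem erasure_noisy_vector_mi {Ω σ : Type*} [Fintype Ω] [Fintype σ] {n : ℕ}
    {β : Fin n → Type*} [∀ i, Fintype (β i)]
    (f : Ω → ℝ) (hf0 : ∀ ω, 0 ≤ f ω) (hf1 : ∑ ω, f ω = 1)
    (p : ℝ) (X : Ω → σ) (Y : ∀ i, Ω → β i) (B : Fin n → Ω → Bool)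
    (hind : ∀ (xy : σ × ∀ i, β i) (b : Fin n → Bool),
      pr f (fun ω => ((X ω, fun i => Y i ω), fun i => B i ω)) (xy, b)
        = pr f (fun ω => (X ω, fun i => Y i ω)) xy * ∏ i, (if b i then p else 1 - p))
    (Z : ∀ i, Ω → Option (β i)) (hZ : ∀ i ω, Z i ω = if B i ω then some (Y i ω) else none)
    (hmem : ∀ (i : Fin n) (x : σ) (b : β i)
        (w : (∀ j : {j : Fin n // j < i}, β j.1) × (∀ j : {j : Fin n // i < j}, Option (β j.1))),
      pr f (fun ω => (X ω, Y i ω,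
            ((fun j : {j : Fin n // j < i} => Y j.1 ω),
             (fun j : {j : Fin n // i < j} => Z j.1 ω)))) (x, b, w) * pr f X x
        = pr f (fun ω => (X ω, Y i ω)) (x, b)
          * pr f (fun ω => (X ω,
              ((fun j : {j : Fin n // j < i} => Y j.1 ω),
               (fun j : {j : Fin n // i < j} => Z j.1 ω)))) (x, w)) :
    mi f X (fun ω i => Z i ω)
      = p * mi f X (fun ω i => Y i ω)
        + (1 - p) * ∑ i, cmi f (Y i)
            (fun ω => fun j : {j : Fin n // i < j} => Z j.1 ω)
            (fun ω => fun j : {j : Fin n // j < i} => Y j.1 ω) := by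
  have hmarkov : mi f X (fun ω i => Y i ω)
      = ∑ i, (cmi f X (Y i) (fun ω => ((fun j : {j : Fin n // j < i} => Y j.1 ω),
            fun j : {j : Fin n // i < j} => Z j.1 ω))
          + cmi f (Y i) (fun ω => fun j : {j : Fin n // i < j} => Z j.1 ω)
            (fun ω => fun j : {j : Fin n // j < i} => Y j.1 ω)) := by
    rw [mi_pi_eq_sum f hf1]
    exact Finset.sum_congr rfl fun i _ => cmi_eq_add_of_condIndepPr f hf0 (hmem i)
  rw [mi_erasure_eq_sub hf1 hind hZ, cmi_pi_eq_sum,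
    Finset.sum_congr rfl fun i _ => cmi_erasure_eq hf1 hind hZ i, ← Finset.mul_sum,
    hmarkov, Finset.sum_add_distrib]
  ring
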